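/- arXiv:math/0202077 — 2 statements merged into one kernel-verified Lean document; each statement's English description precedes it below -/
import Mathlib

section
/- For every positive integer n, the volume of the set {(x_0, x_1, …, x_n) ∈ ℝ^{n+1} : 0 < x_0 < x_1 < ⋯ < x_n and x_j < j for each j = 1, …, n} equals n^n/(n+1)!. -/
/-!
The region is the set of increasing points of the permutation-invariant region
`T = {y ∈ (0, ∞)^(n+1) | #{i | y i < j} > j for j = 1, …, n}`, so its volume is `vol T / (n+1)!`.
Up to a null set, `T` is the union of the unit cubes `r + [0, 1)^(n+1)` over the integer vectors
`r ∈ {0, …, n-1}^(n+1)` satisfying the same counting condition. By the cycle lemma exactly one of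
the `n` cyclic shifts `r - s (mod n)` of any such vector satisfies it, so there are
`n^(n+1) / n = n^n` such cubes.
-/

open Nat Finset MeasureTheory

theorem existsUnique_forall_lt_add_of_add_period {n : ℕ} (hn : 0 < n) (g : ℕ → ℤ)
    (hg : ∀ t < n, g (t + n) = g t + 1) :
    ∃! s : Fin n, ∀ j ∈ Icc 1 n, g s < g (s + j) := by
  have : Nonempty (Fin n) := ⟨⟨0, hn⟩⟩
  obtain ⟨m, -, hm⟩ := univ.exists_min_image (fun t : Fin n => g t) univ_nonempty
  obtain ⟨s, hs, hlast⟩ := (univ.filter fun t : Fin n => g t = g m).exists_max_image id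
    ⟨m, by simp⟩
  -- `s` is the last minimiser of `g` on `[0, n)`
  rw [mem_filter_univ] at hs
  -- two such points `a < b` would give `g a < g b < g (a + n) = g a + 1`
  have no_two : ∀ a b : Fin n, a < b → (∀ j ∈ Icc 1 n, g a < g (a + j)) →
      ¬ ∀ j ∈ Icc 1 n, g b < g (b + j) := by
    intro a b hab ha hb
    have h1 := ha (b - a) (by simp only [mem_Icc]; omega)
    have h2 := hb (a + n - b) (by simp only [mem_Icc]; omega)
    rw [show (a : ℕ) + (b - a) = b by omega] at h1
    rw [show (b : ℕ) + (a + n - b) = a + n by omega, hg a a.isLt] at h2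
    omega
  have hs_min : ∀ j ∈ Icc 1 n, g s < g (s + j) := by
    intro j hj
    rw [mem_Icc] at hj
    rcases lt_or_ge (s + j) n with h | h
    · have hmin := hm ⟨s + j, h⟩ (mem_univ _)
      have hne : g (s + j) ≠ g m := fun he => by
        have := hlast ⟨s + j, h⟩ (by simpa using he)
        simp only [id, Fin.le_def] at this
        omega
      simp only at hmin
      omega
    · have hmin := hm ⟨s + j - n, by omega⟩ (mem_univ _)
      have hper := hg (s + j - n) (by omega)
      rw [Nat.sub_add_cancel h] at hper
      simp only at hmin
      omega
  refine ⟨s, hs_min, fun s' hs' => ?_⟩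
  rcases lt_trichotomy s' s with h | h | h
  · exact (no_two s' s h hs' hs_min).elim
  · exact h
  · exact (no_two s s' h hs_min hs').elim

def ExceedsBelow {α : Type*} [LinearOrder α] [NatCast α] (n : ℕ) (y : Fin (n + 1) → α) : Prop :=
  ∀ j ∈ Icc 1 n, j < #{i | y i < j}

instance {α : Type*} [LinearOrder α] [NatCast α] (n : ℕ) :
    DecidablePred (ExceedsBelow (α := α) n) :=
  fun _ => by unfold ExceedsBelow; infer_instance

theorem card_val_sub_lt_add_card_val_lt {ι : Type*} [Fintype ι] {n : ℕ} (q : ι → Fin n)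
    (s : Fin n) {j : ℕ} (hj : j ≤ n) :
    #{i | ((q i - s : Fin n) : ℕ) < j} + #{i | (q i : ℕ) < s} =
      #{i | (q i : ℕ) < s + j} + #{i | (q i : ℕ) < s + j - n} := by
  simp only [card_filter, ← sum_add_distrib]
  refine sum_congr rfl fun i _ => ?_
  have := (q i).isLt
  rcases le_or_gt s (q i) with h | h
  · rw [Fin.coe_sub_iff_le.2 h]
    split_ifs <;> omega
  · rw [Fin.coe_sub_iff_lt.2 h]
    split_ifs <;> omega

section ExceedsBelow

variable {n : ℕ}

theorem ExceedsBelow.comp_perm {α : Type*} [LinearOrder α] [NatCast α] {y : Fin (n + 1) → α}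
    (h : ExceedsBelow n y) (σ : Equiv.Perm (Fin (n + 1))) : ExceedsBelow n (y ∘ σ) := by
  intro j hj
  rw [card_equiv σ (t := {i | y i < j}) (by simp)]
  exact h j hj

theorem ExceedsBelow.apply_lt {α : Type*} [LinearOrder α] [NatCast α] {y : Fin (n + 1) → α}
    (h : ExceedsBelow n y) (hn : 0 < n) (i : Fin (n + 1)) : y i < n := by
  have hall : #{i | y i < n} = Fintype.card (Fin (n + 1)) :=
    le_antisymm (card_le_univ _) (by simpa using h n (mem_Icc.2 ⟨hn, le_rfl⟩))
  have hi : i ∈ ({i | y i < n} : Finset (Fin (n + 1))) := by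
    rw [eq_univ_of_card _ hall]
    exact mem_univ i
  exact (mem_filter_univ i).1 hi

theorem exceedsBelow_natFloor_iff {α : Type*} [Semiring α] [LinearOrder α] [FloorSemiring α]
    {y : Fin (n + 1) → α} (hy : ∀ i, 0 ≤ y i) :
    ExceedsBelow n (fun i => ⌊y i⌋₊) ↔ ExceedsBelow n y := by
  refine forall₂_congr fun j _ => ?_
  simp only [Nat.cast_id]
  rw [filter_congr fun i _ => Nat.floor_lt (hy i)]

theorem StrictMono.exceedsBelow_iff {α : Type*} [LinearOrder α] [NatCast α]
    {y : Fin (n + 1) → α} (hy : StrictMono y) :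
    ExceedsBelow n y ↔ ∀ i : Fin (n + 1), 1 ≤ (i : ℕ) → y i < (i : ℕ) := by
  refine ⟨fun h i hi => ?_, fun h j hj => ?_⟩
  · by_contra! hle
    have hsub : ({k | y k < (i : ℕ)} : Finset (Fin (n + 1))) ⊆ Iio i := fun k hk => by
      simpa [hy.lt_iff_lt] using ((mem_filter_univ _).1 hk).trans_le hle
    have := h i (mem_Icc.2 ⟨hi, Nat.lt_succ_iff.1 i.isLt⟩)
    have := (card_le_card hsub).trans_eq (Fin.card_Iio i)
    omega
  · obtain ⟨hj1, hjn⟩ := mem_Icc.1 hj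
    let J : Fin (n + 1) := ⟨j, Nat.lt_succ_of_le hjn⟩
    have hsub : Iic J ⊆ ({k | y k < j} : Finset (Fin (n + 1))) := fun k hk =>
      (mem_filter_univ _).2 ((hy.monotone (mem_Iic.1 hk)).trans_lt (h J hj1))
    simpa [J] using (Fin.card_Iic J).symm.trans_le (card_le_card hsub)

theorem existsUnique_exceedsBelow_val_sub (hn : 0 < n) (q : Fin (n + 1) → Fin n) :
    ∃! s : Fin n, ExceedsBelow n (fun i => ((q i - s : Fin n) : ℕ)) := by
  let N (t : ℕ) : ℕ := #{i | (q i : ℕ) < t}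
  have hN0 : N 0 = 0 := by simp [N]
  have hN_of_le (t : ℕ) (ht : n ≤ t) : N t = n + 1 := by
    simp only [N, filter_true_of_mem fun i _ => (q i).isLt.trans_le ht, Finset.card_univ,
      Fintype.card_fin]
  -- `N t + N (t - n)` counts the points `q i` and `q i + n` lying below `t`
  refine (existsUnique_congr fun s => ?_).2 (existsUnique_forall_lt_add_of_add_period hn
    (fun t => (N t + N (t - n) : ℤ) - t) fun t ht => ?_)
  · refine forall₂_congr fun j hj => ?_
    have := card_val_sub_lt_add_card_val_lt q s (mem_Icc.1 hj).2
    rw [Nat.sub_eq_zero_of_le s.isLt.le, hN0]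
    simp only [N, Nat.cast_id] at this ⊢
    omega
  · rw [hN_of_le (t + n) (by omega), Nat.add_sub_cancel, Nat.sub_eq_zero_of_le ht.le, hN0]
    push_cast
    ring

theorem card_exceedsBelow (hn : 0 < n) :
    #{r : Fin (n + 1) → Fin n | ExceedsBelow n (fun i => (r i : ℕ))} = n ^ n := by
  have : NeZero n := ⟨hn.ne'⟩
  set A : (Fin (n + 1) → Fin n) → Prop := fun r => ExceedsBelow n (fun i => (r i : ℕ))
  have hfiber : ∀ q, #{s : Fin n | A (q - fun _ => s)} = 1 := fun q =>
    (Fintype.existsUnique_iff_card_one _).1 (existsUnique_exceedsBelow_val_sub hn q)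
  have hshift : ∀ s : Fin n, #{q | A (q - fun _ => s)} = #{r | A r} := fun s =>
    card_equiv (Equiv.subRight fun _ => s) (by simp)
  refine Nat.eq_of_mul_eq_mul_left hn ?_
  calc n * #{r | A r} = ∑ s : Fin n, #{q | A (q - fun _ => s)} := by simp [hshift]
    _ = ∑ q, #{s : Fin n | A (q - fun _ => s)} := by simp only [card_filter]; exact sum_comm
    _ = n * n ^ n := by simp [hfiber, pow_succ']

end ExceedsBelow

theorem ae_apply_ne_apply {ι : Type*} [Fintype ι] {i j : ι} (hij : i ≠ j) :
    ∀ᵐ y : ι → ℝ, y i ≠ y j := by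
  classical
  let L : (ι → ℝ) →ₗ[ℝ] ℝ := (LinearMap.proj i : (ι → ℝ) →ₗ[ℝ] ℝ) - LinearMap.proj j
  have hL : LinearMap.ker L ≠ ⊤ := fun h => by
    have : Pi.single i (1 : ℝ) ∈ LinearMap.ker L := h ▸ Submodule.mem_top
    simp [L, hij] at this
  refine measure_mono_null (fun y hy => ?_) (Measure.addHaar_submodule volume _ hL)
  simpa [L, sub_eq_zero] using hy

theorem ae_injective {ι : Type*} [Fintype ι] : ∀ᵐ y : ι → ℝ, Function.Injective y := by
  have h : ∀ i j, ∀ᵐ y : ι → ℝ, i ≠ j → y i ≠ y j := fun i j => by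
    by_cases hij : i = j
    · simp [hij]
    · filter_upwards [ae_apply_ne_apply hij] with y hy using fun _ => hy
  filter_upwards [ae_all_iff.2 fun i => ae_all_iff.2 (h i)] with y hy i j hyij
  by_contra hne
  exact hy i j hne hyij

theorem measurableSet_strictMono {ι : Type*} [Countable ι] [Preorder ι] :
    MeasurableSet {y : ι → ℝ | StrictMono y} := by
  simp only [StrictMono, Set.ofPred_forall]
  exact .iInter fun a => .iInter fun b => .iInter fun _ =>
    measurableSet_lt (measurable_pi_apply a) (measurable_pi_apply b)

theorem Equiv.Perm.eq_of_strictMono_comp {ι α : Type*} [LinearOrder ι] [WellFoundedLT ι]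
    [Preorder α] {y : ι → α} {σ τ : Equiv.Perm ι} (hσ : StrictMono (y ∘ σ))
    (hτ : StrictMono (y ∘ τ)) : σ = τ := by
  have hy : Function.Injective y := hσ.injective.of_comp_right σ.surjective
  have h : y ∘ σ = y ∘ τ := (hσ.range_inj hτ).1 (by rw [EquivLike.range_comp, EquivLike.range_comp])
  exact Equiv.ext fun i => hy (congrFun h i)

theorem volume_eq_factorial_mul_volume_inter_strictMono {m : ℕ} {A : Set (Fin m → ℝ)}
    (hA : MeasurableSet A) (hperm : ∀ σ : Equiv.Perm (Fin m), ∀ y ∈ A, y ∘ σ ∈ A) :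
    volume A = m ! * volume (A ∩ {y | StrictMono y}) := by
  let e (σ : Equiv.Perm (Fin m)) : (Fin m → ℝ) ≃ᵐ (Fin m → ℝ) :=
    MeasurableEquiv.arrowCongr' σ.symm (.refl ℝ)
  have he : ∀ σ y, e σ y = y ∘ σ := fun _ _ => rfl
  have he_vol : ∀ σ, MeasurePreserving (e σ) :=
    fun σ => volume_preserving_arrowCongr' _ _ (.id volume)
  set B := A ∩ {y | StrictMono y}
  have hcover : A =ᵐ[volume] ⋃ σ, e σ ⁻¹' B := by
    refine Filter.eventuallyEq_set.2 ?_
    filter_upwards [ae_injective] with y hy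
    simp only [Set.mem_iUnion, Set.mem_preimage, he, B, Set.mem_inter_iff, Set.mem_ofPred_eq]
    refine ⟨fun h => ⟨Tuple.sort y, hperm _ y h,
      (Tuple.monotone_sort y).strictMono_of_injective (hy.comp (Equiv.injective _))⟩,
      fun ⟨σ, h, _⟩ => ?_⟩
    simpa [Function.comp_assoc] using hperm σ.symm _ h
  have hdisj : Pairwise (Function.onFun Disjoint fun σ => e σ ⁻¹' B) := fun σ τ hne =>
    Set.disjoint_left.2 fun y h h' => hne (Equiv.Perm.eq_of_strictMono_comp h.2 h'.2)
  have hB : MeasurableSet B := hA.inter measurableSet_strictMono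
  calc volume A = volume (⋃ σ, e σ ⁻¹' B) := measure_congr hcover
    _ = ∑ σ, volume (e σ ⁻¹' B) := by
      rw [measure_iUnion hdisj fun σ => (e σ).measurable hB, tsum_fintype]
    _ = m ! * volume B := by
      simp [(he_vol _).measure_preimage_equiv, Fintype.card_perm]

theorem volume_setOf_natFloor_mem {ι : Type*} [Fintype ι] (R : Finset (ι → ℕ)) :
    volume {y : ι → ℝ | (∀ i, 0 ≤ y i) ∧ (fun i => ⌊y i⌋₊) ∈ R} = #R := by
  have hcell : ∀ r : ι → ℕ, {y : ι → ℝ | (∀ i, 0 ≤ y i) ∧ (fun i => ⌊y i⌋₊) = r} =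
      Set.univ.pi fun i => Set.Ico (r i : ℝ) (r i + 1) := by
    intro r
    ext y
    simp only [Set.mem_ofPred_eq, Set.mem_univ_pi, Set.mem_Ico, funext_iff, ← forall_and]
    refine forall_congr' fun i => ⟨fun ⟨h0, hr⟩ => (Nat.floor_eq_iff h0).1 hr, fun h => ?_⟩
    have h0 : 0 ≤ y i := (Nat.cast_nonneg _).trans h.1
    exact ⟨h0, (Nat.floor_eq_iff h0).2 h⟩
  have hunion : {y : ι → ℝ | (∀ i, 0 ≤ y i) ∧ (fun i => ⌊y i⌋₊) ∈ R} =
      ⋃ r ∈ R, {y : ι → ℝ | (∀ i, 0 ≤ y i) ∧ (fun i => ⌊y i⌋₊) = r} := by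
    ext y
    simp
  rw [hunion, measure_biUnion_finset]
  · simp [hcell, volume_pi_pi, Real.volume_Ico]
  · exact fun r _ r' _ hne => Set.disjoint_left.2 fun y h h' => hne (h.2.symm.trans h'.2)
  · intro r _
    rw [hcell]
    exact .univ_pi fun _ => measurableSet_Ico

def exceedsBelowSet (n : ℕ) : Set (Fin (n + 1) → ℝ) := {y | (∀ i, 0 < y i) ∧ ExceedsBelow n y}

theorem measurableSet_exceedsBelowSet (n : ℕ) : MeasurableSet (exceedsBelowSet n) := by
  have h : exceedsBelowSet n = {y | ∀ i, 0 < y i} ∩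
      (fun y i => ⌊y i⌋₊) ⁻¹' {r : Fin (n + 1) → ℕ | ExceedsBelow n r} := by
    ext y
    simp only [exceedsBelowSet, Set.mem_inter_iff, Set.mem_preimage, Set.mem_ofPred_eq]
    exact and_congr_right fun hy => (exceedsBelow_natFloor_iff fun i => (hy i).le).symm
  rw [h, Set.ofPred_forall]
  exact (MeasurableSet.iInter fun i =>
    measurableSet_lt measurable_const (measurable_pi_apply i)).inter
    ((Set.to_countable _).measurableSet.preimage
      (measurable_pi_lambda _ fun i => Nat.measurable_floor.comp (measurable_pi_apply i)))

theorem volume_exceedsBelowSet {n : ℕ} (hn : 0 < n) : volume (exceedsBelowSet n) = n ^ n := by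
  let R := (univ.filter fun r : Fin (n + 1) → Fin n => ExceedsBelow n (fun i => (r i : ℕ))).map
    ⟨fun r i => (r i : ℕ), fun r r' h => funext fun i => Fin.ext (congrFun h i)⟩
  have hR : ∀ r : Fin (n + 1) → ℕ, r ∈ R ↔ ExceedsBelow n r := fun r => by
    simp only [R, mem_map, mem_filter_univ]
    exact ⟨fun ⟨a, ha, har⟩ => har ▸ ha, fun h => ⟨fun i => ⟨r i, h.apply_lt hn i⟩, h, rfl⟩⟩
  calc volume (exceedsBelowSet n)
      = volume {y : Fin (n + 1) → ℝ | (∀ i, 0 ≤ y i) ∧ (fun i => ⌊y i⌋₊) ∈ R} := by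
        refine measure_congr (Filter.eventuallyEq_set.2 ?_)
        filter_upwards [ae_all_iff.2 fun i => Measure.ae_eval_ne _ i 0] with y hy
        have hpos : (∀ i, 0 < y i) ↔ ∀ i, 0 ≤ y i :=
          forall_congr' fun i => (hy i).symm.le_iff_lt.symm
        simp only [exceedsBelowSet, Set.mem_ofPred_eq, hR]
        exact ⟨fun h => ⟨hpos.1 h.1, (exceedsBelow_natFloor_iff (hpos.1 h.1)).2 h.2⟩,
          fun h => ⟨hpos.2 h.1, (exceedsBelow_natFloor_iff h.1).1 h.2⟩⟩
    _ = #R := volume_setOf_natFloor_mem R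
    _ = n ^ n := by rw [card_map, card_exceedsBelow hn]; push_cast; rfl

theorem setOf_increasing_lt_eq_exceedsBelowSet_inter {n : ℕ} :
    {x : Fin (n + 1) → ℝ |
        0 < x ⟨0, Nat.succ_pos _⟩ ∧
        (∀ i j : Fin (n + 1), i < j → x i < x j) ∧
        (∀ i : Fin (n + 1), ∀ j : ℕ, 1 ≤ j → j ≤ n → (i : ℕ) = j → x i < j)} =
      exceedsBelowSet n ∩ {y | StrictMono y} := by
  ext x
  constructor
  · rintro ⟨h0, hmono, hbound⟩
    replace hmono : StrictMono x := hmono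
    exact ⟨⟨fun i => h0.trans_le (hmono.monotone (Fin.zero_le i)),
      hmono.exceedsBelow_iff.2 fun i hi => hbound i i hi (Nat.lt_succ_iff.1 i.isLt) rfl⟩, hmono⟩
  · rintro ⟨⟨hpos, hE⟩, hmono⟩
    exact ⟨hpos _, hmono, fun i j hj _ hij => hij ▸ hmono.exceedsBelow_iff.1 hE i (hij ▸ hj)⟩

theorem stmt8 (n : ℕ) (hn : 0 < n) :
    volume {x : Fin (n + 1) → ℝ |
        0 < x ⟨0, Nat.succ_pos _⟩ ∧
        (∀ i j : Fin (n + 1), i < j → x i < x j) ∧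
        (∀ i : Fin (n + 1), ∀ j : ℕ, 1 ≤ j → j ≤ n → (i : ℕ) = j → x i < j)} =
      ENNReal.ofReal ((n : ℝ) ^ n / ((n + 1)! : ℝ)) := by
  have hsort := volume_eq_factorial_mul_volume_inter_strictMono
    (measurableSet_exceedsBelowSet n) fun σ y hy => ⟨fun i => hy.1 (σ i), hy.2.comp_perm σ⟩
  rw [volume_exceedsBelowSet hn, ← setOf_increasing_lt_eq_exceedsBelowSet_inter] at hsort
  rw [ENNReal.ofReal_div_of_pos (by positivity), ENNReal.ofReal_pow (Nat.cast_nonneg n),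
    ENNReal.ofReal_natCast, ENNReal.ofReal_natCast,
    ENNReal.eq_div_iff (by simp [factorial_ne_zero]) (ENNReal.natCast_ne_top _), ← hsort]
end

section
/- Let n, k be positive integers and let S = {(x_0,…,x_{nk}) ∈ ℝ^{nk+1} : 0 < x_0 < ⋯ < x_{nk} < n, no x_i ∈ ℤ}. For x ∈ S and integer m, let m+x denote the increasing rearrangement of (x_i + m mod n). Then S is, up to a null set, the disjoint union of the n sets {x ∈ S : m + x ∈ V_{k,n}} for m = 0, 1, …, n−1, where V_{k,n} = {x ∈ S : x_{jk} < j for j = 1,…,n}; consequently vol V_{k,n} = (1/n) · n^{nk+1}/(nk+1)! = n^{nk}/(nk+1)!. -/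
open Nat MeasureTheory

/-- `realMod t n` is the representative of `t` modulo `n` lying in `[0,n)`. -/
noncomputable def realMod (t : ℝ) (n : ℕ) : ℝ := t - n * ⌊t / (n : ℝ)⌋

/-- The set of strictly increasing tuples in `(0,n)` avoiding the integers. -/
def Sset (n k : ℕ) : Set (Fin (n * k + 1) → ℝ) :=
  {x | (∀ i j : Fin (n * k + 1), i < j → x i < x j) ∧
    ∀ i : Fin (n * k + 1), 0 < x i ∧ x i < n ∧ ∀ z : ℤ, x i ≠ (z : ℝ)}

/-- The set `V_{k,n}`. -/
def Vset (n k : ℕ) : Set (Fin (n * k + 1) → ℝ) :=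
  {x | x ∈ Sset n k ∧
    ∀ i : Fin (n * k + 1), ∀ j : ℕ, 1 ≤ j → j ≤ n → (i : ℕ) = j * k → x i < j}

/-!
For `x ∈ S` let `a j` be the number of coordinates of `x` in `(j, j + 1)`, extended
`n`-periodically, and `f t = a 0 + ⋯ + a (t - 1) - t k`, so that `f (t + n) = f t + 1` because
`x` has `n k + 1` coordinates. Rotating `x` by `m` rotates the sequence `a` by `m`, and
`m + x ∈ V` says that every initial block of `t` terms of the rotated sequence has sum `> t k`,
i.e. `f (n - m) < f (n - m + t)` for `0 < t ≤ n`. By the cycle lemma exactly one `m < n` does this.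

If exactly the top `c` coordinates of `x` exceed `n - m`, then `m + x` is obtained from `x` by
rotating the indices by `c` and translating, a volume-preserving affine map; its inverse has the
same shape, for `n - m` and `N - c`. Hence `{x ∈ S | m + x ∈ V}` has the volume of `V` for each
`m`, so `vol S = n vol V`, while `S` is, up to a null set, one of the `N!` congruent chambers
`{x | x ∘ σ strictly increasing}` of the cube `(0, n)^N`, where `N = n k + 1`.
-/

open Finset Function
open scoped ENNReal

lemma realMod_eq_self {t : ℝ} {n : ℕ} (h0 : 0 ≤ t) (h1 : t < n) : realMod t n = t := by
  have hn : (0 : ℝ) < n := h0.trans_lt h1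
  simp [realMod, Int.floor_eq_zero_iff.2 ⟨div_nonneg h0 hn.le, (div_lt_one hn).2 h1⟩]

lemma realMod_eq_sub {t : ℝ} {n : ℕ} (h0 : (n : ℝ) ≤ t) (h1 : t < 2 * n) :
    realMod t n = t - n := by
  have hn : (0 : ℝ) < n := by linarith
  have : ⌊t / (n : ℝ)⌋ = 1 := by
    rw [Int.floor_eq_iff]
    constructor
    · rw [Int.cast_one, le_div_iff₀ hn]; linarith
    · rw [div_lt_iff₀ hn]; push_cast; linarith
  simp [realMod, this]

lemma realMod_nonneg (t : ℝ) {n : ℕ} (hn : 0 < n) : 0 ≤ realMod t n := by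
  rw [realMod, sub_nonneg, ← le_div_iff₀' (by exact_mod_cast hn)]
  exact Int.floor_le _

lemma floor_realMod {t : ℝ} (n : ℕ) (ht : 0 ≤ t) : ⌊realMod t n⌋₊ = ⌊t⌋₊ % n := by
  have hq : ⌊t / (n : ℝ)⌋ = ((⌊t⌋₊ / n : ℕ) : ℤ) := by
    rw [← Nat.floor_div_natCast, Int.natCast_floor_eq_floor (by positivity)]
  have hcast : (n : ℝ) * ((⌊t⌋₊ / n : ℕ) : ℤ) = ((n * (⌊t⌋₊ / n) : ℕ) : ℝ) := by push_cast; rfl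
  rw [realMod, hq, hcast, Nat.floor_sub_natCast, Nat.mod_def]

lemma Nat.add_mod_eq_iff_eq_sub_add_mod {n b m j : ℕ} (hb : b < n) (hj : j < n) (hm : m ≤ n) :
    (b + m) % n = j ↔ b = (n - m + j) % n :=
  calc (b + m) % n = j ↔ b + m ≡ n - m + j + m [MOD n] := by
        rw [Nat.ModEq, show n - m + j + m = j + n by omega, Nat.add_mod_right, Nat.mod_eq_of_lt hj]
    _ ↔ b ≡ n - m + j [MOD n] := ⟨Nat.ModEq.add_right_cancel' m, fun h => h.add_right m⟩
    _ ↔ b = (n - m + j) % n := by rw [Nat.ModEq, Nat.mod_eq_of_lt hb]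

theorem cycle_lemma {f : ℕ → ℤ} {n : ℕ} (hn : 0 < n) (hf : ∀ t, f (t + n) = f t + 1) :
    ∃! s, (0 < s ∧ s ≤ n) ∧ ∀ t, 0 < t → t ≤ n → f s < f (s + t) := by
  have at_most_one : ∀ a b, 0 < a → a < b → b ≤ n →
      (∀ t, 0 < t → t ≤ n → f a < f (a + t)) → ¬ ∀ t, 0 < t → t ≤ n → f b < f (b + t) := by
    intro a b ha hab hb hga hgb
    have h1 := hga (b - a) (by omega) (by omega)
    have h2 := hgb (a + n - b) (by omega) (by omega)
    rw [show a + (b - a) = b by omega] at h1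
    rw [show b + (a + n - b) = a + n by omega, hf] at h2
    omega
  -- `n * f s - s` is minimal exactly at the largest minimizer of `f` on `[1, n]`.
  obtain ⟨s, hs, hmin⟩ :=
    (Icc 1 n).exists_min_image (fun s => n * f s - s) ⟨1, mem_Icc.2 ⟨le_rfl, hn⟩⟩
  rw [mem_Icc] at hs
  have hn' : (0 : ℤ) < n := by exact_mod_cast hn
  have hgood : ∀ t, 0 < t → t ≤ n → f s < f (s + t) := by
    intro t ht htn
    by_cases hst : s + t ≤ n
    · have := hmin (s + t) (mem_Icc.2 ⟨by omega, hst⟩)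
      push_cast at this
      by_contra! h
      nlinarith
    · obtain ⟨u, rfl⟩ : ∃ u, t = u + n - s := ⟨s + t - n, by omega⟩
      have := hmin u (mem_Icc.2 ⟨by omega, by omega⟩)
      rw [show s + (u + n - s) = u + n by omega, hf]
      by_contra! h
      have hu : (1 : ℤ) ≤ u := by exact_mod_cast (show 1 ≤ u by omega)
      have hsn : (s : ℤ) ≤ n := by exact_mod_cast hs.2
      nlinarith [mul_le_mul_of_nonneg_left h hn'.le]
  refine ⟨s, ⟨⟨hs.1, hs.2⟩, hgood⟩, fun s' ⟨hs', hgood'⟩ => ?_⟩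
  rcases lt_trichotomy s' s with h | h | h
  · exact (at_most_one s' s hs'.1 h hs.2 hgood' hgood).elim
  · exact h
  · exact (at_most_one s s' hs.1 h hs'.2 hgood hgood').elim

section Counting

variable {N : ℕ}

noncomputable def countLT (x : Fin N → ℝ) (t : ℝ) : ℕ := #{i | x i < t}

noncomputable def countFloorEq (x : Fin N → ℝ) (j : ℕ) : ℕ := #{i | ⌊x i⌋₊ = j}

/-- The number of points `x i + q * n` (`q : ℕ`) below `t`, when `0 ≤ x i < n`. -/
noncomputable def periodicCount (x : Fin N → ℝ) (n t : ℕ) : ℕ :=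
  ∑ j ∈ range t, countFloorEq x (j % n)

def SplitsAt (x : Fin N → ℝ) (a : ℝ) (c : ℕ) : Prop := ∀ i : Fin N, x i < a ↔ (i : ℕ) < c

lemma countLT_le (x : Fin N → ℝ) (t : ℝ) : countLT x t ≤ N :=
  (card_filter_le _ _).trans_eq (card_fin N)

lemma countLT_comp_equiv (x : Fin N → ℝ) (e : Fin N ≃ Fin N) (t : ℝ) :
    countLT (x ∘ e) t = countLT x t :=
  card_equiv e (by simp)

lemma StrictMono.lt_iff_lt_countLT {x : Fin N → ℝ} (hx : StrictMono x) (p : Fin N) (t : ℝ) :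
    x p < t ↔ (p : ℕ) < countLT x t := by
  constructor
  · intro h
    have : Iic p ⊆ ({i | x i < t} : Finset (Fin N)) := fun i hi =>
      mem_filter.2 ⟨mem_univ _, (hx.monotone (mem_Iic.1 hi)).trans_lt h⟩
    have hcard := card_le_card this
    rwa [Fin.card_Iic] at hcard
  · intro h
    rw [countLT] at h
    by_contra! hp
    have : ({i | x i < t} : Finset (Fin N)) ⊆ Iio p := fun i hi =>
      mem_Iio.2 (hx.lt_iff_lt.1 ((mem_filter.1 hi).2.trans_le hp))
    simpa using h.trans_le (card_le_card this)

lemma StrictMono.existsUnique_splitsAt {x : Fin N → ℝ} (hx : StrictMono x) (a : ℝ) :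
    ∃! c, c ∈ range (N + 1) ∧ SplitsAt x a c := by
  have hle := countLT_le x a
  refine ⟨countLT x a, ⟨mem_range.2 (by omega), fun i => hx.lt_iff_lt_countLT i a⟩,
    fun c ⟨hc, hsplit⟩ => ?_⟩
  rw [mem_range] at hc
  by_contra hne
  obtain ⟨i, hi⟩ : ∃ i : Fin N, (i : ℕ) = min c (countLT x a) := ⟨⟨_, by omega⟩, rfl⟩
  have := (hsplit i).symm.trans (hx.lt_iff_lt_countLT i a)
  omega

lemma countLT_natCast_eq_sum {x : Fin N → ℝ} (hx : ∀ i, 0 ≤ x i) (t : ℕ) :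
    countLT x t = ∑ j ∈ range t, countFloorEq x j := by
  rw [countLT, card_eq_sum_card_fiberwise (f := fun i => ⌊x i⌋₊) (t := range t)]
  · refine sum_congr rfl fun j hj => ?_
    rw [countFloorEq, filter_filter]
    refine congrArg card (filter_congr fun i _ => ?_)
    simp only [and_iff_right_iff_imp]
    rintro rfl
    exact (Nat.floor_lt (hx i)).1 (mem_range.1 hj)
  · intro i hi
    exact mem_range.2 ((Nat.floor_lt (hx i)).2 (mem_filter.1 hi).2)

lemma periodicCount_add_period (x : Fin N → ℝ) (n t : ℕ) :
    periodicCount x n (t + n) = periodicCount x n t + periodicCount x n n := by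
  induction t with
  | zero => simp [periodicCount]
  | succ t ih =>
    simp only [periodicCount] at ih ⊢
    rw [show t + 1 + n = t + n + 1 by omega, sum_range_succ, ih, sum_range_succ,
      Nat.add_mod_right]
    ring

lemma countLT_realMod_add {n m : ℕ} {x : Fin N → ℝ} (hn : 0 < n) (hx0 : ∀ i, 0 ≤ x i)
    (hxn : ∀ i, x i < n) (hm : m ≤ n) {t : ℕ} (ht : t ≤ n) :
    countLT (fun i => realMod (x i + m) n) t + periodicCount x n (n - m) =
      periodicCount x n (n - m + t) := by
  rw [countLT_natCast_eq_sum (fun i => realMod_nonneg _ hn), periodicCount, periodicCount,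
    sum_range_add, add_comm]
  refine congrArg _ (sum_congr rfl fun j hj => congrArg card (filter_congr fun i _ => ?_))
  rw [floor_realMod _ (by linarith [hx0 i]), Nat.floor_add_natCast (hx0 i)]
  exact Nat.add_mod_eq_iff_eq_sub_add_mod ((Nat.floor_lt (hx0 i)).2 (hxn i))
    (by simp at hj; omega) hm

end Counting

open Fin.NatCast

lemma Fin.val_sub_natCast_of_lt {N c : ℕ} [NeZero N] (hc : c ≤ N) {i : Fin N} (hi : (i : ℕ) < c) :
    ((i - c : Fin N) : ℕ) = i + N - c := by
  rw [Fin.val_sub, Fin.val_natCast]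
  rcases hc.lt_or_eq with hc | rfl
  · rw [Nat.mod_eq_of_lt hc, Nat.mod_eq_of_lt (by omega)]; omega
  · rw [Nat.mod_self, Nat.sub_zero, Nat.add_comm, Nat.add_mod_right, Nat.mod_eq_of_lt i.2]; omega

lemma Fin.val_sub_natCast_of_le {N c : ℕ} [NeZero N] {i : Fin N} (hi : c ≤ (i : ℕ)) :
    ((i - c : Fin N) : ℕ) = i - c := by
  have hc : c < N := hi.trans_lt i.2
  rw [Fin.val_sub, Fin.val_natCast, Nat.mod_eq_of_lt hc,
    show N - c + i = (i - c) + N by omega, Nat.add_mod_right, Nat.mod_eq_of_lt (by omega)]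

/-- When exactly the top `c` coordinates of `x` exceed `n - m`, this is the increasing
rearrangement of `realMod (x i + m) n` (`rotateShift_eq_comp`). -/
def rotateShift {N : ℕ} [NeZero N] (n m c : ℕ) (x : Fin N → ℝ) : Fin N → ℝ :=
  fun i => x (i - c) + if (i : ℕ) < c then (m : ℝ) - n else m

lemma rotateShift_rotateShift {N n m c : ℕ} [NeZero N] (hm : m ≤ n) (hc : c ≤ N)
    (x : Fin N → ℝ) : rotateShift n (n - m) (N - c) (rotateShift n m c x) = x := by
  funext i
  have hidx : i - ((N - c : ℕ) : Fin N) - (c : Fin N) = i := by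
    rw [sub_sub, ← Nat.cast_add, Nat.sub_add_cancel hc, Fin.natCast_self, sub_zero]
  simp only [rotateShift, hidx, Nat.cast_sub hm]
  by_cases hi : (i : ℕ) < N - c
  · rw [if_neg (by rw [Fin.val_sub_natCast_of_lt (Nat.sub_le N c) hi]; omega), if_pos hi]
    ring
  · rw [if_pos (by rw [Fin.val_sub_natCast_of_le (not_lt.1 hi)]; omega), if_neg hi]
    ring

section Sset

variable {n k m c : ℕ} {x : Fin (n * k + 1) → ℝ}

lemma strictMono_of_mem_Sset (hx : x ∈ Sset n k) : StrictMono x := fun _ _ h => hx.1 _ _ h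

lemma lt_sub_iff_of_splitsAt (hc : c ≤ n * k + 1) (hsplit : SplitsAt x (n - m) (n * k + 1 - c))
    (i : Fin (n * k + 1)) : x (i - c) < n - m ↔ c ≤ (i : ℕ) := by
  rw [hsplit]
  by_cases hi : (i : ℕ) < c
  · simp only [Fin.val_sub_natCast_of_lt hc hi]; omega
  · simp only [Fin.val_sub_natCast_of_le (not_lt.1 hi)]; omega

lemma sub_lt_iff_of_splitsAt (hx : x ∈ Sset n k) (hc : c ≤ n * k + 1)
    (hsplit : SplitsAt x (n - m) (n * k + 1 - c)) (i : Fin (n * k + 1)) :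
    (n : ℝ) - m < x (i - c) ↔ (i : ℕ) < c := by
  have hne : x (i - c) ≠ (n : ℝ) - m := by
    simpa using (hx.2 (i - c)).2.2 (n - m)
  rw [← not_iff_not, not_lt, not_lt, hne.le_iff_lt, lt_sub_iff_of_splitsAt hc hsplit]

lemma rotateShift_eq_comp (hx : x ∈ Sset n k) (hm : m ≤ n) (hc : c ≤ n * k + 1)
    (hsplit : SplitsAt x (n - m) (n * k + 1 - c)) :
    rotateShift n m c x =
      (fun i => realMod (x i + m) n) ∘ Equiv.subRight (c : Fin (n * k + 1)) := by
  funext i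
  obtain ⟨hx0, hxn, -⟩ := hx.2 (i - c)
  have hmn : (m : ℝ) ≤ n := by exact_mod_cast hm
  simp only [Function.comp_apply, Equiv.subRight_apply]
  by_cases hi : (i : ℕ) < c
  · have := (sub_lt_iff_of_splitsAt hx hc hsplit i).2 hi
    rw [realMod_eq_sub (by linarith) (by linarith)]
    simp only [rotateShift, hi, ↓reduceIte]; ring
  · have := (lt_sub_iff_of_splitsAt hc hsplit i).2 (not_lt.1 hi)
    rw [realMod_eq_self (by positivity) (by linarith)]
    simp only [rotateShift, hi, ↓reduceIte]

lemma splitsAt_rotateShift (hx : x ∈ Sset n k) : SplitsAt (rotateShift n m c x) m c := by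
  intro i
  obtain ⟨hx0, hxn, -⟩ := hx.2 (i - c)
  by_cases hi : (i : ℕ) < c
  · simp only [rotateShift, hi, ↓reduceIte, iff_true]; linarith
  · simp only [rotateShift, hi, ↓reduceIte, iff_false, not_lt]; linarith

lemma strictMono_rotateShift (hx : x ∈ Sset n k) (hc : c ≤ n * k + 1) :
    StrictMono (rotateShift n m c x) := by
  intro i j hij
  have hij' : (i : ℕ) < j := hij
  have hlow : SplitsAt (rotateShift n m c x) m c := splitsAt_rotateShift hx
  by_cases hj : (j : ℕ) < c
  · have hi : (i : ℕ) < c := hij'.trans hj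
    have := strictMono_of_mem_Sset hx (show (i - c : Fin (n * k + 1)) < j - c by
      simp only [Fin.lt_def, Fin.val_sub_natCast_of_lt hc hi, Fin.val_sub_natCast_of_lt hc hj]
      omega)
    simp only [rotateShift, hi, hj, ↓reduceIte]; linarith
  by_cases hi : (i : ℕ) < c
  · exact ((hlow i).2 hi).trans_le (not_lt.1 ((hlow j).not.2 hj))
  · have := strictMono_of_mem_Sset hx (show (i - c : Fin (n * k + 1)) < j - c by
      simp only [Fin.lt_def, Fin.val_sub_natCast_of_le (not_lt.1 hi),
        Fin.val_sub_natCast_of_le (not_lt.1 hj)]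
      omega)
    simp only [rotateShift, hi, hj, ↓reduceIte]; linarith

lemma rotateShift_mem_Sset (hx : x ∈ Sset n k) (hm : m ≤ n) (hc : c ≤ n * k + 1)
    (hsplit : SplitsAt x (n - m) (n * k + 1 - c)) : rotateShift n m c x ∈ Sset n k := by
  refine ⟨fun i j hij => strictMono_rotateShift hx hc hij, fun i => ?_⟩
  obtain ⟨hx0, hxn, hxz⟩ := hx.2 (i - c)
  have hmn : (m : ℝ) ≤ n := by exact_mod_cast hm
  by_cases hi : (i : ℕ) < c
  · have := (sub_lt_iff_of_splitsAt hx hc hsplit i).2 hi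
    simp only [rotateShift, hi, ↓reduceIte]
    refine ⟨by linarith, by linarith, fun z hz => hxz (z - m + n) ?_⟩
    push_cast; linarith
  · have := (lt_sub_iff_of_splitsAt hc hsplit i).2 (not_lt.1 hi)
    simp only [rotateShift, hi, ↓reduceIte]
    refine ⟨by positivity, by linarith, fun z hz => hxz (z - m) ?_⟩
    push_cast; linarith

lemma splitsAt_of_rotateShift (hm : m ≤ n) (hc : c ≤ n * k + 1)
    (hT : rotateShift n m c x ∈ Sset n k) (hsplit : SplitsAt (rotateShift n m c x) m c) :
    x ∈ Sset n k ∧ SplitsAt x (n - m) (n * k + 1 - c) := by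
  have hsplit' : SplitsAt (rotateShift n m c x) ((n : ℝ) - (n - m : ℕ))
      (n * k + 1 - (n * k + 1 - c)) := by
    rwa [Nat.cast_sub hm, sub_sub_cancel, Nat.sub_sub_self hc]
  have hinv := rotateShift_rotateShift (n := n) hm hc x
  refine ⟨hinv ▸ rotateShift_mem_Sset hT (Nat.sub_le n m) (Nat.sub_le _ c) hsplit', ?_⟩
  rw [← Nat.cast_sub hm, ← hinv]
  exact splitsAt_rotateShift hT

lemma existsUnique_splitsAt_sub (hx : x ∈ Sset n k) (a : ℝ) :
    ∃! c, c ∈ range (n * k + 2) ∧ SplitsAt x a (n * k + 1 - c) := by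
  obtain ⟨d, ⟨hd, hsplit⟩, huniq⟩ := (strictMono_of_mem_Sset hx).existsUnique_splitsAt a
  rw [mem_range] at hd
  refine ⟨n * k + 1 - d, ⟨mem_range.2 (by omega), by rwa [Nat.sub_sub_self (by omega)]⟩,
    fun c ⟨hc, hsplit'⟩ => ?_⟩
  have := huniq _ ⟨mem_range.2 (by omega), hsplit'⟩
  rw [mem_range] at hc
  omega

lemma mem_Vset_iff (hx : x ∈ Sset n k) :
    x ∈ Vset n k ↔ ∀ t, 0 < t → t ≤ n → t * k < countLT x t := by
  have hmono := strictMono_of_mem_Sset hx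
  refine ⟨fun hV t ht htn => ?_, fun h => ⟨hx, fun i t ht htn hi => ?_⟩⟩
  · have hidx : t * k < n * k + 1 := Nat.lt_succ_of_le (Nat.mul_le_mul_right k htn)
    simpa using (hmono.lt_iff_lt_countLT ⟨t * k, hidx⟩ t).1 (hV.2 _ t ht htn rfl)
  · exact (hmono.lt_iff_lt_countLT i t).2 (hi ▸ h t ht htn)

lemma periodicCount_period (hx : x ∈ Sset n k) : periodicCount x n n = n * k + 1 := by
  rw [periodicCount, sum_congr rfl fun j hj => by rw [Nat.mod_eq_of_lt (mem_range.1 hj)],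
    ← countLT_natCast_eq_sum fun i => (hx.2 i).1.le, countLT,
    filter_true_of_mem fun i _ => (hx.2 i).2.1, Finset.card_fin]

end Sset

/-- The paper's `m + x ∈ V_{k,n}`. -/
def ShiftMemV (n k m : ℕ) (x : Fin (n * k + 1) → ℝ) : Prop :=
  ∀ y : Fin (n * k + 1) → ℝ, (∀ i j : Fin (n * k + 1), i < j → y i < y j) →
    Set.range y = (fun t => realMod t n) '' Set.range (fun i => x i + m) → y ∈ Vset n k

section ShiftMemV

variable {n k m c : ℕ} {x : Fin (n * k + 1) → ℝ}

lemma shiftMemV_iff (hx : x ∈ Sset n k) (hm : m ≤ n) (hc : c ≤ n * k + 1)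
    (hsplit : SplitsAt x (n - m) (n * k + 1 - c)) :
    ShiftMemV n k m x ↔ rotateShift n m c x ∈ Vset n k := by
  have hT := rotateShift_mem_Sset hx hm hc hsplit
  have hrange : Set.range (rotateShift n m c x) =
      (fun t => realMod t n) '' Set.range (fun i => x i + m) := by
    rw [← Set.range_comp, rotateShift_eq_comp hx hm hc hsplit,
      (Equiv.subRight _).surjective.range_comp]
    rfl
  refine ⟨fun h => h _ hT.1 hrange, fun hV y hy hr => ?_⟩
  rwa [(StrictMono.range_inj (fun i j h => hy i j h) (strictMono_of_mem_Sset hT)).1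
    (hr.trans hrange.symm)]

lemma shiftMemV_iff_periodicCount (hx : x ∈ Sset n k) (hn : 0 < n) (hm : m ≤ n) :
    ShiftMemV n k m x ↔ ∀ t, 0 < t → t ≤ n →
      t * k + periodicCount x n (n - m) < periodicCount x n (n - m + t) := by
  obtain ⟨c, ⟨hc, hsplit⟩, -⟩ := existsUnique_splitsAt_sub hx (n - m)
  have hc : c ≤ n * k + 1 := Nat.le_of_lt_succ (mem_range.1 hc)
  rw [shiftMemV_iff hx hm hc hsplit, mem_Vset_iff (rotateShift_mem_Sset hx hm hc hsplit),
    rotateShift_eq_comp hx hm hc hsplit]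
  refine forall₂_congr fun t _ => forall_congr' fun ht => ?_
  have := countLT_realMod_add hn (fun i => (hx.2 i).1.le) (fun i => (hx.2 i).2.1) hm ht
  rw [countLT_comp_equiv]
  omega

theorem existsUnique_shiftMemV (hn : 0 < n) (hx : x ∈ Sset n k) :
    ∃! m, m < n ∧ ShiftMemV n k m x := by
  set f : ℕ → ℤ := fun t => periodicCount x n t - t * k
  have hf : ∀ t, f (t + n) = f t + 1 := by
    intro t
    simp only [f, periodicCount_add_period, periodicCount_period hx]
    push_cast; ring
  have hshift : ∀ m ≤ n,
      ShiftMemV n k m x ↔ ∀ t, 0 < t → t ≤ n → f (n - m) < f (n - m + t) := by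
    intro m hm
    rw [shiftMemV_iff_periodicCount hx hn hm]
    refine forall₂_congr fun t _ => forall_congr' fun _ => ?_
    simp only [f]
    push_cast
    constructor <;> intro h <;> linarith
  obtain ⟨s, ⟨hs, hgood⟩, huniq⟩ := cycle_lemma hn hf
  refine ⟨n - s, ⟨by omega, (hshift _ (Nat.sub_le n s)).2 ?_⟩, fun m ⟨hm, hM⟩ => ?_⟩
  · rwa [Nat.sub_sub_self hs.2]
  · have := huniq (n - m) ⟨by omega, (hshift m hm.le).1 hM⟩
    omega

end ShiftMemV

section OrderedCube

variable {N : ℕ}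

lemma measurePreserving_comp_equiv (e : Fin N ≃ Fin N) :
    MeasurePreserving (fun x : Fin N → ℝ => x ∘ e) volume volume := by
  convert volume_measurePreserving_piCongrLeft (fun _ : Fin N => ℝ) e.symm
  ext x
  simp [MeasurableEquiv.piCongrLeft, Equiv.piCongrLeft, Equiv.piCongrLeft']

lemma volume_setOf_apply_eq_apply {i j : Fin N} (h : i ≠ j) :
    volume {x : Fin N → ℝ | x i = x j} = 0 := by
  let L : (Fin N → ℝ) →ₗ[ℝ] ℝ := (LinearMap.proj i : (Fin N → ℝ) →ₗ[ℝ] ℝ) - LinearMap.proj j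
  have hker : {x : Fin N → ℝ | x i = x j} = (LinearMap.ker L : Set (Fin N → ℝ)) := by
    ext x; simp [L, sub_eq_zero]
  rw [hker]
  refine Measure.addHaar_submodule _ _ fun htop => ?_
  have : Pi.single i 1 ∈ LinearMap.ker L := htop ▸ Submodule.mem_top
  simp [L, h.symm] at this

lemma volume_setOf_not_injective : volume {x : Fin N → ℝ | ¬ Injective x} = 0 := by
  have : {x : Fin N → ℝ | ¬ Injective x} = ⋃ i, ⋃ j, ⋃ (_ : i ≠ j), {x | x i = x j} := by
    ext x; simp [Injective]; tauto
  rw [this]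
  exact measure_iUnion_null fun i => measure_iUnion_null fun j => measure_iUnion_null
    fun h => volume_setOf_apply_eq_apply h

lemma pairwise_disjoint_setOf_strictMono_comp :
    Pairwise (Disjoint on fun σ : Equiv.Perm (Fin N) => {x : Fin N → ℝ | StrictMono (x ∘ σ)}) := by
  intro σ τ hστ
  refine Set.disjoint_left.2 fun x (hσ : StrictMono (x ∘ σ)) (hτ : StrictMono (x ∘ τ)) => hστ ?_
  have hinj : Injective x := by simpa using hσ.injective.comp σ.symm.injective
  have := Tuple.unique_monotone (f := x) hσ.monotone hτ.monotone
  exact Equiv.ext fun i => hinj (congrFun this i)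

lemma Function.Injective.strictMono_comp_sort {x : Fin N → ℝ} (hx : Injective x) :
    StrictMono (x ∘ Tuple.sort x) :=
  (Tuple.monotone_sort x).strictMono_of_injective (hx.comp (Tuple.sort x).injective)

theorem factorial_mul_volume_strictMono_inter_pi {s : Set ℝ} (hs : MeasurableSet s) :
    (N ! : ℝ≥0∞) * volume ({x : Fin N → ℝ | StrictMono x} ∩ Set.univ.pi fun _ => s) =
      volume (Set.univ.pi fun _ => s : Set (Fin N → ℝ)) := by
  set C : Set (Fin N → ℝ) := Set.univ.pi fun _ => s
  set R := {x : Fin N → ℝ | StrictMono x} ∩ C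
  have hR : MeasurableSet R := by
    refine MeasurableSet.inter ?_ (.univ_pi fun _ => hs)
    unfold StrictMono; measurability
  set P : Equiv.Perm (Fin N) → Set (Fin N → ℝ) := fun σ => (· ∘ σ) ⁻¹' R
  have hPC : ∀ σ, P σ ⊆ C := fun σ x hx i _ => by simpa using hx.2 (σ.symm i) trivial
  have hcover : C ⊆ (⋃ σ, P σ) ∪ {x | ¬ Injective x} := fun x hx => by
    by_cases hinj : Injective x
    · exact Or.inl (Set.mem_iUnion.2 ⟨_, hinj.strictMono_comp_sort, fun i _ => hx _ trivial⟩)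
    · exact Or.inr hinj
  have hdisj : Pairwise (Disjoint on P) := fun σ τ hστ =>
    (pairwise_disjoint_setOf_strictMono_comp hστ).mono (fun _ hx => hx.1) fun _ hx => hx.1
  calc (N ! : ℝ≥0∞) * volume R = ∑ σ : Equiv.Perm (Fin N), volume (P σ) := by
        rw [sum_congr rfl fun σ _ => (measurePreserving_comp_equiv σ).measure_preimage
          hR.nullMeasurableSet, sum_const, Finset.card_univ, Fintype.card_perm, Fintype.card_fin,
          nsmul_eq_mul]
    _ = volume (⋃ σ, P σ) := by
        rw [measure_iUnion hdisj fun σ => hR.preimage (measurePreserving_comp_equiv σ).measurable,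
          tsum_fintype]
    _ = volume C := le_antisymm (measure_mono (Set.iUnion_subset hPC)) <|
        (measure_mono hcover).trans <| (measure_union_le _ _).trans <| by
          rw [volume_setOf_not_injective, add_zero]

end OrderedCube

lemma measure_eq_sum_inter_of_existsUnique {α ι : Type*} [MeasurableSpace α] (μ : Measure α)
    {s : Finset ι} {A : Set α} {B : ι → Set α} (h : ∀ x ∈ A, ∃! c, c ∈ s ∧ x ∈ B c)
    (hmeas : ∀ c ∈ s, MeasurableSet (A ∩ B c)) : μ A = ∑ c ∈ s, μ (A ∩ B c) := by
  have hA : A = ⋃ c ∈ s, A ∩ B c := by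
    ext x
    simp only [Set.mem_iUnion, Set.mem_inter_iff, exists_prop]
    exact ⟨fun hx => (h x hx).exists.imp fun c hc => ⟨hc.1, hx, hc.2⟩, fun ⟨_, _, hx, _⟩ => hx⟩
  conv_lhs => rw [hA]
  refine measure_biUnion_finset (fun c hc c' hc' hne => Set.disjoint_left.2 ?_) hmeas
  exact fun x hx hx' => hne ((h x hx.1).unique ⟨hc, hx.2⟩ ⟨hc', hx'.2⟩)

section Volume

variable {N : ℕ} {n k m c : ℕ}

lemma measurableSet_Sset : MeasurableSet (Sset n k) := by
  unfold Sset; measurability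

lemma measurableSet_Vset : MeasurableSet (Vset n k) :=
  measurableSet_Sset.inter <| measurableSet_setOfPred.2 <| .forall fun i => .forall fun _ =>
    .imp measurable_const <| .imp measurable_const <| .imp measurable_const <|
      measurableSet_setOfPred.1 (measurableSet_lt (measurable_pi_apply i) measurable_const)

lemma measurableSet_setOf_splitsAt (a : ℝ) (c : ℕ) :
    MeasurableSet {x : Fin N → ℝ | SplitsAt x a c} := by
  unfold SplitsAt; measurability

lemma measurePreserving_rotateShift [NeZero N] (n m c : ℕ) :
    MeasurePreserving (rotateShift n m c : (Fin N → ℝ) → Fin N → ℝ) volume volume :=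
  (measurePreserving_add_right volume fun i : Fin N => if (i : ℕ) < c then (m : ℝ) - n else m).comp
    (measurePreserving_comp_equiv (Equiv.subRight (c : Fin N)))

lemma inter_splitsAt_eq_preimage_rotateShift (hm : m ≤ n) (hc : c ≤ n * k + 1) :
    (Sset n k ∩ {x | ShiftMemV n k m x}) ∩ {x | SplitsAt x (n - m) (n * k + 1 - c)} =
      rotateShift n m c ⁻¹' (Vset n k ∩ {y | SplitsAt y m c}) := by
  ext x
  constructor
  · rintro ⟨⟨hx, hV⟩, hsplit⟩
    exact ⟨(shiftMemV_iff hx hm hc hsplit).1 hV, splitsAt_rotateShift hx⟩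
  · rintro ⟨hV, hsplit⟩
    obtain ⟨hx, hsplit'⟩ := splitsAt_of_rotateShift hm hc hV.1 hsplit
    exact ⟨⟨hx, (shiftMemV_iff hx hm hc hsplit').2 hV⟩, hsplit'⟩

lemma measurableSet_inter_splitsAt (hm : m ≤ n) (hc : c ∈ range (n * k + 2)) :
    MeasurableSet ((Sset n k ∩ {x | ShiftMemV n k m x}) ∩
      {x | SplitsAt x (n - m) (n * k + 1 - c)}) := by
  rw [inter_splitsAt_eq_preimage_rotateShift hm (Nat.le_of_lt_succ (mem_range.1 hc))]
  exact (measurableSet_Vset.inter (measurableSet_setOf_splitsAt _ _)).preimage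
    (measurePreserving_rotateShift n m c).measurable

lemma measurableSet_shiftMemV (hm : m ≤ n) :
    MeasurableSet (Sset n k ∩ {x | ShiftMemV n k m x}) := by
  have hcover : Sset n k ∩ {x | ShiftMemV n k m x} ⊆
      ⋃ c ∈ range (n * k + 2), {x | SplitsAt x (n - m) (n * k + 1 - c)} := fun x hx =>
    have ⟨_, hc, _⟩ := existsUnique_splitsAt_sub hx.1 (n - m)
    Set.mem_biUnion hc.1 hc.2
  rw [← Set.inter_eq_left.2 hcover, Set.inter_iUnion₂]
  exact .biUnion (countable_toSet _) fun c hc => measurableSet_inter_splitsAt hm hc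

lemma volume_shiftMemV (hm : m ≤ n) :
    volume (Sset n k ∩ {x | ShiftMemV n k m x}) = volume (Vset n k) := by
  rw [measure_eq_sum_inter_of_existsUnique volume (s := range (n * k + 2))
      (B := fun c => {x | SplitsAt x (n - m) (n * k + 1 - c)})
      (fun x hx => existsUnique_splitsAt_sub hx.1 _) fun c hc => measurableSet_inter_splitsAt hm hc,
    measure_eq_sum_inter_of_existsUnique volume (A := Vset n k) (s := range (n * k + 2))
      (B := fun c => {y | SplitsAt y m c})
      (fun y hy => (strictMono_of_mem_Sset hy.1).existsUnique_splitsAt m)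
      fun c _ => measurableSet_Vset.inter (measurableSet_setOf_splitsAt _ _)]
  refine sum_congr rfl fun c hc => ?_
  rw [inter_splitsAt_eq_preimage_rotateShift hm (Nat.le_of_lt_succ (mem_range.1 hc))]
  exact (measurePreserving_rotateShift n m c).measure_preimage
    (measurableSet_Vset.inter (measurableSet_setOf_splitsAt _ _)).nullMeasurableSet

lemma volume_Sset_eq_mul_volume_Vset (hn : 0 < n) :
    volume (Sset n k) = n * volume (Vset n k) := by
  rw [measure_eq_sum_inter_of_existsUnique volume (s := range n)
      (B := fun m => {x | ShiftMemV n k m x})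
      (fun x hx => by simpa using existsUnique_shiftMemV hn hx)
      fun m hm => measurableSet_shiftMemV (mem_range.1 hm).le,
    sum_congr rfl fun m hm => volume_shiftMemV (mem_range.1 hm).le, sum_const, card_range,
    nsmul_eq_mul]

lemma factorial_mul_volume_Sset :
    ((n * k + 1)! : ℝ≥0∞) * volume (Sset n k) = ENNReal.ofReal n ^ (n * k + 1) := by
  have hS : Sset n k = ({x | StrictMono x} ∩ Set.univ.pi fun _ => Set.Ioo (0 : ℝ) n) \
      ⋃ i, ⋃ z : ℤ, {x | x i = z} := by
    ext x
    simp only [Sset, StrictMono, Set.mem_ofPred_eq, Set.mem_sdiff, Set.mem_inter_iff, Set.mem_pi,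
      Set.mem_univ, forall_const, Set.mem_Ioo, Set.mem_iUnion, not_exists]
    exact ⟨fun ⟨h1, h2⟩ => ⟨⟨fun a b h => h1 a b h, fun i => ⟨(h2 i).1, (h2 i).2.1⟩⟩,
        fun i => (h2 i).2.2⟩,
      fun ⟨⟨h1, h2⟩, h3⟩ => ⟨fun a b h => h1 h, fun i => ⟨(h2 i).1, (h2 i).2, h3 i⟩⟩⟩
  have hnull : volume (⋃ i, ⋃ z : ℤ, {x : Fin (n * k + 1) → ℝ | x i = z}) = 0 :=
    measure_iUnion_null fun i => measure_iUnion_null fun z => by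
      rw [volume_pi]; exact Measure.pi_hyperplane _ i _
  rw [hS, measure_sdiff_null hnull, factorial_mul_volume_strictMono_inter_pi measurableSet_Ioo,
    Real.volume_pi_Ioo]
  simp

lemma volume_Vset (hn : 0 < n) :
    volume (Vset n k) = ENNReal.ofReal ((n : ℝ) ^ (n * k) / ((n * k + 1)! : ℝ)) := by
  have h := factorial_mul_volume_Sset (n := n) (k := k)
  rw [volume_Sset_eq_mul_volume_Vset hn, ← mul_assoc] at h
  have hA : (((n * k + 1)! * n : ℕ) : ℝ≥0∞) ≠ 0 := by positivity
  refine (ENNReal.mul_right_inj (by exact_mod_cast hA) (by finiteness)).1 (h.trans ?_)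
  rw [← ENNReal.ofReal_pow (Nat.cast_nonneg n), ← ENNReal.ofReal_natCast,
    ← ENNReal.ofReal_natCast (n : ℕ), ← ENNReal.ofReal_mul (by positivity),
    ← ENNReal.ofReal_mul (by positivity)]
  congr 1
  field_simp
  ring

end Volume

theorem stmt15_general (n k : ℕ) (hn : 0 < n) :
    (∀ᵐ x : Fin (n * k + 1) → ℝ ∂volume, x ∈ Sset n k →
      ∃! m : ℕ, m < n ∧ ∀ y : Fin (n * k + 1) → ℝ,
        (∀ i j : Fin (n * k + 1), i < j → y i < y j) →
        Set.range y = (fun t => realMod t n) '' Set.range (fun i => x i + m) →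
        y ∈ Vset n k) ∧
    volume (Vset n k) = ENNReal.ofReal ((n : ℝ) ^ (n * k) / ((n * k + 1)! : ℝ)) :=
  ⟨ae_of_all _ fun _ hx => existsUnique_shiftMemV hn hx, volume_Vset hn⟩

theorem stmt15 (n k : ℕ) (hn : 0 < n) (hk : 0 < k) :
    (∀ᵐ x : Fin (n * k + 1) → ℝ ∂volume, x ∈ Sset n k →
      ∃! m : ℕ, m < n ∧ ∀ y : Fin (n * k + 1) → ℝ,
        (∀ i j : Fin (n * k + 1), i < j → y i < y j) →
        Set.range y = (fun t => realMod t n) '' Set.range (fun i => x i + m) →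
        y ∈ Vset n k) ∧
    volume (Vset n k) = ENNReal.ofReal ((n : ℝ) ^ (n * k) / ((n * k + 1)! : ℝ)) :=
  stmt15_general n k hn
end
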